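/- Let P = R^n be a free module over a commutative ring R with n ≥ 3, p ∈ P, and φ ∈ P* = Hom(P, R) with φ(p) = 0, where p or φ is unimodular. Then the transvection 1 + φ_p (given by the matrix I_n + v·w^t, where v is the coordinate vector of p and w represents φ) lies in E_n(R). -/

import Mathlib

/-!
Write `1 + φ_p` for `1 + v wᵀ`. Since `(1 + φ_p) (1 + ψ_p) = 1 + (φ + ψ)_p` whenever `φ(p) = 0`,
the forms `φ` with `φ(p) = 0` and `1 + φ_p ∈ E_n(R)` form an additive monoid, and transposition,
which preserves `E_n(R)`, exchanges the roles of `p` and `φ`. If `p` and `φ` both vanish at a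
coordinate `r`, then `1 + φ_p` is the commutator of `1 + (e_r^*)_p` and `1 + φ_{e_r}`, and these
are products of elementary matrices; splitting off the `r`-th coordinate of `p` removes the
condition on `p`. Finally, if `u(p) = 1` then `φ = ∑_{i,j} u_i φ_j (p_i e_j - p_j e_i)`, and as
`n ≥ 3` each summand vanishes at a coordinate outside `{i, j}`.
-/

/-- Elementary generators `e_{ij}(x)`, `x ∈ S`. -/
def elemGens (n : ℕ) (S : Type) [CommRing S] :
    Set (Matrix (Fin n) (Fin n) S)ˣ :=
  {g | ∃ i j : Fin n, i ≠ j ∧ ∃ x : S,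
    (g : Matrix (Fin n) (Fin n) S) = 1 + Matrix.single i j x}

/-- The elementary subgroup `E_n(S)`. -/
def En (n : ℕ) (S : Type) [CommRing S] : Subgroup (Matrix (Fin n) (Fin n) S)ˣ :=
  Subgroup.closure (elemGens n S)

open Matrix

section

variable {n : ℕ} {R : Type} [CommRing R]

def EnMat (n : ℕ) (R : Type) [CommRing R] : Submonoid (Matrix (Fin n) (Fin n) R) :=
  (En n R).toSubmonoid.map (Units.coeHom _)

namespace EnMat

theorem transvection_mem {i j : Fin n} (hij : i ≠ j) (c : R) : transvection i j c ∈ EnMat n R :=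
  Submonoid.mem_map.2 ⟨⟨transvection i j c, transvection i j (-c),
      by rw [transvection_mul_transvection_same _ _ hij, add_neg_cancel, transvection_zero],
      by rw [transvection_mul_transvection_same _ _ hij, neg_add_cancel, transvection_zero]⟩,
    Subgroup.subset_closure ⟨i, j, hij, c, rfl⟩, rfl⟩

theorem transpose_mem {M : Matrix (Fin n) (Fin n) R} (hM : M ∈ EnMat n R) : Mᵀ ∈ EnMat n R := by
  rw [EnMat, Submonoid.mem_map] at hM
  obtain ⟨g, hg, rfl⟩ := hM
  induction hg using Subgroup.closure_induction'' with
  | mem g hg =>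
    obtain ⟨i, j, hij, c, hgc⟩ := hg
    rw [Units.coeHom_apply, hgc, transpose_add, transpose_one, transpose_single]
    exact transvection_mem hij.symm c
  | inv_mem g hg =>
    obtain ⟨i, j, hij, c, hgc⟩ := hg
    have hinv : ((g⁻¹ : (Matrix (Fin n) (Fin n) R)ˣ) : Matrix (Fin n) (Fin n) R)
        = transvection i j (-c) := Units.inv_eq_of_mul_eq_one_right <| by
      rw [hgc, ← transvection, transvection_mul_transvection_same _ _ hij, add_neg_cancel,
        transvection_zero]
    rw [Units.coeHom_apply, hinv, transvection, transpose_add, transpose_one, transpose_single]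
    exact transvection_mem hij.symm _
  | one => simp [(EnMat n R).one_mem]
  | mul g h _ _ hg hh =>
    rw [map_mul, transpose_mul]
    exact mul_mem hh hg

end EnMat

def elemTransvectionForms (v : Fin n → R) : AddSubmonoid (Fin n → R) where
  carrier := {w | w ⬝ᵥ v = 0 ∧ 1 + vecMulVec v w ∈ EnMat n R}
  zero_mem' := by simp [(EnMat n R).one_mem]
  add_mem' := by
    rintro w w' ⟨hw, hwE⟩ ⟨hw', hw'E⟩
    refine ⟨by rw [add_dotProduct, hw, hw', add_zero], ?_⟩
    have : (1 + vecMulVec v w) * (1 + vecMulVec v w') = 1 + vecMulVec v (w + w') := by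
      rw [mul_add, add_mul, add_mul, vecMulVec_mul_vecMulVec, hw, zero_smul, vecMulVec_zero,
        vecMulVec_add]
      noncomm_ring
    exact this ▸ mul_mem hwE hw'E

theorem mem_elemTransvectionForms_comm {v w : Fin n → R} :
    w ∈ elemTransvectionForms v ↔ v ∈ elemTransvectionForms w := by
  suffices ∀ v w : Fin n → R, w ∈ elemTransvectionForms v → v ∈ elemTransvectionForms w from
    ⟨this v w, this w v⟩
  rintro v w ⟨hwv, hE⟩
  refine ⟨by rwa [dotProduct_comm], ?_⟩
  simpa [transpose_add, transpose_vecMulVec] using EnMat.transpose_mem hE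

theorem mem_elemTransvectionForms_single {k : Fin n} {u : Fin n → R} (hu : u k = 0) (c : R) :
    u ∈ elemTransvectionForms (Pi.single k c) := by
  rw [← Finset.univ_sum_single u]
  refine sum_mem fun j _ => ?_
  by_cases hjk : j = k
  · rw [hjk, hu, Pi.single_zero]
    exact zero_mem _
  · refine ⟨by simp [hjk], ?_⟩
    have : vecMulVec (Pi.single k c) (Pi.single j (u j)) = single k j (c * u j) := by
      ext a b
      simp only [vecMulVec_apply, Pi.single_apply, single_apply, mul_ite, ite_mul, mul_zero,
        zero_mul, ite_and, eq_comm]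
      split_ifs <;> rfl
    rw [this]
    exact EnMat.transvection_mem (Ne.symm hjk) _

theorem one_add_vecMulVec_commutator {m : Type*} [Fintype m] [DecidableEq m] {v w e : m → R}
    (hev : e ⬝ᵥ v = 0) (hwe : w ⬝ᵥ e = 0) (hee : e ⬝ᵥ e = 1) (hwv : w ⬝ᵥ v = 0) :
    (1 + vecMulVec v e) * (1 + vecMulVec e w) * (1 + vecMulVec (-v) e) *
      (1 + vecMulVec e (-w)) = 1 + vecMulVec v w := by
  simp only [vecMulVec_neg, neg_vecMulVec, mul_add, add_mul, mul_one, one_mul, mul_neg, neg_mul,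
    vecMulVec_mul_vecMulVec, hev, hwe, hee, hwv, zero_smul, one_smul, vecMulVec_zero, zero_mul]
  abel

theorem mem_elemTransvectionForms_of_apply_eq_zero_of_apply_eq_zero {r : Fin n}
    {v w : Fin n → R} (hv : v r = 0) (hw : w r = 0) (hwv : w ⬝ᵥ v = 0) :
    w ∈ elemTransvectionForms v := by
  have hA := mem_elemTransvectionForms_comm.1 (mem_elemTransvectionForms_single hv 1)
  have hA' := mem_elemTransvectionForms_comm.1
    (mem_elemTransvectionForms_single (k := r) (u := -v) (by simp [hv]) 1)
  have hB := mem_elemTransvectionForms_single hw 1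
  have hB' := mem_elemTransvectionForms_single (k := r) (u := -w) (by simp [hw]) 1
  refine ⟨hwv, ?_⟩
  rw [← one_add_vecMulVec_commutator (e := Pi.single r 1) (by simp [hv]) (by simp [hw])
    (by simp) hwv]
  exact mul_mem (mul_mem (mul_mem hA.2 hB.2) hA'.2) hB'.2

theorem mem_elemTransvectionForms_of_apply_eq_zero {r : Fin n} {v w : Fin n → R}
    (hw : w r = 0) (hwv : w ⬝ᵥ v = 0) : w ∈ elemTransvectionForms v := by
  rw [mem_elemTransvectionForms_comm, ← sub_add_cancel v (Pi.single r (v r))]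
  refine add_mem (mem_elemTransvectionForms_comm.1 ?_)
    (mem_elemTransvectionForms_comm.1 (mem_elemTransvectionForms_single hw _))
  exact mem_elemTransvectionForms_of_apply_eq_zero_of_apply_eq_zero (by simp) hw
    (by simp [dotProduct_sub, hwv, hw])

theorem sum_sum_smul_single_sub_single {m : Type*} [Fintype m] [DecidableEq m]
    (u v w : m → R) :
    ∑ i, ∑ j, (u i * w j) • (Pi.single j (v i) - Pi.single i (v j)) =
      (u ⬝ᵥ v) • w - (w ⬝ᵥ v) • u := by
  ext l
  simp only [Finset.sum_apply, Pi.smul_apply, Pi.sub_apply, Pi.single_apply, smul_eq_mul, mul_sub,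
    mul_ite, mul_zero, Finset.sum_sub_distrib, Finset.sum_ite_eq, Finset.mem_univ, if_true,
    Finset.sum_ite_irrel, Finset.sum_const_zero, dotProduct, Finset.sum_mul]
  congr 1 <;> exact Finset.sum_congr rfl fun _ _ => by ring

theorem mem_elemTransvectionForms_of_dotProduct_eq_one (hn : 3 ≤ n) {u v w : Fin n → R}
    (hu : u ⬝ᵥ v = 1) (hwv : w ⬝ᵥ v = 0) : w ∈ elemTransvectionForms v := by
  have hw : w = ∑ i, ∑ j, (u i * w j) • (Pi.single j (v i) - Pi.single i (v j)) := by
    rw [sum_sum_smul_single_sub_single, hu, hwv, one_smul, zero_smul, sub_zero]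
  rw [hw]
  refine sum_mem fun i _ => sum_mem fun j _ => ?_
  obtain ⟨r, hri, hrj⟩ := Fin.exists_ne_and_ne_of_two_lt i j hn
  refine mem_elemTransvectionForms_of_apply_eq_zero (r := r) (by simp [hri, hrj]) ?_
  simp only [smul_dotProduct, sub_dotProduct, single_dotProduct, smul_eq_mul]
  ring

end

/-- for a free module `P = R^n`, `n ≥ 3`, `p ∈ P` (with coordinate
vector `v`) and `φ ∈ P*` (represented by `w`) with `φ(p) = 0`, where `p` or `φ`
is unimodular, the transvection `1 + φ_p = I_n + v·wᵗ` lies in `E_n(R)`. -/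
theorem free_transvection_elementary (n : ℕ) (hn : 3 ≤ n) (R : Type)
    [CommRing R] (v w : Fin n → R)
    (hphi : dotProduct w v = 0)
    (huni : (∃ u : Fin n → R, ∑ i, u i * v i = 1) ∨
      (∃ u : Fin n → R, ∑ i, u i * w i = 1)) :
    ∃ g ∈ En n R,
      (g : Matrix (Fin n) (Fin n) R) = 1 + Matrix.vecMulVec v w := by
  suffices w ∈ elemTransvectionForms v from Submonoid.mem_map.1 this.2
  rcases huni with ⟨u, hu⟩ | ⟨u, hu⟩
  · exact mem_elemTransvectionForms_of_dotProduct_eq_one hn hu hphi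
  · rw [dotProduct_comm] at hphi
    exact mem_elemTransvectionForms_comm.2
      (mem_elemTransvectionForms_of_dotProduct_eq_one hn hu hphi)
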